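/- arXiv:1907.11416 — 2 statements merged into one kernel-verified Lean document; each statement's English description precedes it below -/
import Mathlib

section
/- Let G = (V, E) be a simple undirected graph with V = {v_1, …, v_n}, let m ≤ ℓ and r be positive integers with ℓ, r < n, and let G' be the graph constructed from G as described. Let L be a 1-distance m-tuple (ℓ, r)-dominating set of G' and set D = {v_i ∈ V : v_i¹ ∈ L}. If U¹ ⊆ V is a nonempty set with |U¹| = s such that (⋃_{u ∈ U¹} N¹_G[u]) ∩ D = ∅, then |L ∩ (V² ∪ V³)| ≥ ℓ + s. -/
open Set

/-!
Let `a = |L ∩ V²| ≤ ℓ - 1`. A vertex `u¹` with `u ∈ U¹` sees no vertex of `L ∩ V¹`, so its closed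
neighborhood meets `L` only inside `V²`, and a vertex of `V³` sees only itself and `V²`. Apply
condition (ii) to `r` vertices made of `min(r, s)` vertices of `U¹` together with vertices of `V³`,
chosen outside `L` as far as possible: at most `r - min(r, s) - |V³ \ L|` of the latter lie in `L`,
so `ℓ ≤ a + (r - min(r, s) - |V³ \ L|)`. Since `a < ℓ`, the bracket is positive, which forces
`s < r` and `ℓ + s ≤ a + |V³ ∩ L|`.
-/

/-- Closed `d`-distance neighborhood `N^d_G[v]`: the set of vertices at shortest-path
distance at most `d` from `v` in `G`. -/
def closedNbhd {V : Type*} (G : SimpleGraph V) (d : ℕ) (v : V) : Set V :=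
  {u | G.Reachable u v ∧ G.dist u v ≤ d}

/-- `S` is a `d`-distance `m`-tuple `(ℓ, r)`-dominating set of `G`:
(i) every vertex has at least `m` vertices of `S` in its closed `d`-neighborhood, and
(ii) for every set `U` of `r` vertices, the union of the closed `d`-neighborhoods of the
vertices of `U` contains at least `ℓ` vertices of `S`. -/
def IsDistTupleDomSet {V : Type*} (G : SimpleGraph V) (d m ℓ r : ℕ) (S : Set V) : Prop :=
  (∀ v : V, m ≤ (closedNbhd G d v ∩ S).ncard) ∧
  (∀ U : Set V, U.ncard = r → ℓ ≤ ((⋃ u ∈ U, closedNbhd G d u) ∩ S).ncard)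

/-- Adjacency of the graph `G'` built from `G`: `V¹` is a copy of `V` retaining the edges of
`G` (encoded as `Sum.inl`), `V² = Fin (ℓ - 1)` (encoded as `Sum.inr ∘ Sum.inl`) induces a
clique joined completely to `V¹`, and `V³ = Fin r` (encoded as `Sum.inr ∘ Sum.inr`) is joined
completely to `V²`. -/
def primeAdj {V : Type*} (G : SimpleGraph V) (ℓ r : ℕ) :
    V ⊕ (Fin (ℓ - 1) ⊕ Fin r) → V ⊕ (Fin (ℓ - 1) ⊕ Fin r) → Prop
  | Sum.inl a, Sum.inl b => G.Adj a b
  | Sum.inl _, Sum.inr (Sum.inl _) => True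
  | Sum.inr (Sum.inl _), Sum.inl _ => True
  | Sum.inr (Sum.inl a), Sum.inr (Sum.inl b) => a ≠ b
  | Sum.inr (Sum.inl _), Sum.inr (Sum.inr _) => True
  | Sum.inr (Sum.inr _), Sum.inr (Sum.inl _) => True
  | _, _ => False

/-- The graph `G' = (V¹ ∪ V² ∪ V³, E¹ ∪ E² ∪ E³ ∪ E⁴)` constructed from `G`. -/
def Gprime {V : Type*} (G : SimpleGraph V) (ℓ r : ℕ) :
    SimpleGraph (V ⊕ (Fin (ℓ - 1) ⊕ Fin r)) where
  Adj := primeAdj G ℓ r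
  symm := by
    constructor
    rintro (a | b | c) (a' | b' | c') h <;> simp_all [primeAdj]
    · exact h.symm
    · exact Ne.symm h
  loopless := by
    constructor
    rintro (a | b | c) h <;> simp_all [primeAdj]

lemma mem_closedNbhd_one {V : Type*} {G : SimpleGraph V} {u v : V} :
    u ∈ closedNbhd G 1 v ↔ u = v ∨ G.Adj u v := by
  constructor
  · rintro ⟨hreach, hdist⟩
    rcases Nat.le_one_iff_eq_zero_or_eq_one.mp hdist with h | h
    · exact .inl (hreach.dist_eq_zero_iff.mp h)
    · exact .inr (SimpleGraph.dist_eq_one_iff_adj.mp h)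
  · rintro (rfl | h)
    · exact ⟨.refl u, by simp⟩
    · exact ⟨h.reachable, (SimpleGraph.dist_eq_one_iff_adj.mpr h).le⟩

lemma Set.exists_subset_ncard_eq_ncard_inter_le {α : Type*} {W : Set α} (L : Set α)
    (hW : W.Finite) {n : ℕ} (hn : n ≤ W.ncard) :
    ∃ Z ⊆ W, Z.ncard = n ∧ (Z ∩ L).ncard ≤ n - (W \ L).ncard := by
  by_cases hout : n ≤ (W \ L).ncard
  · obtain ⟨Z, hZ, rfl⟩ := exists_subset_card_eq hout
    refine ⟨Z, hZ.trans sdiff_subset, rfl, ?_⟩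
    have : Z ∩ L = ∅ := eq_empty_of_forall_notMem fun x hx ↦ (hZ hx.1).2 hx.2
    simp [this]
  · have hsplit := ncard_inter_add_ncard_sdiff_eq_ncard W L hW
    obtain ⟨Y, hY, hYcard⟩ :=
      exists_subset_card_eq (show n - (W \ L).ncard ≤ (W ∩ L).ncard by omega)
    have hdisj : Disjoint (W \ L) Y := disjoint_left.mpr fun x hx hxY ↦ hx.2 (hY hxY).2
    refine ⟨(W \ L) ∪ Y, union_subset sdiff_subset (hY.trans inter_subset_left), ?_, ?_⟩
    · rw [ncard_union_eq hdisj hW.sdiff (hW.subset (hY.trans inter_subset_left))]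
      omega
    · rw [← hYcard]
      refine ncard_le_ncard ?_ (hW.subset (hY.trans inter_subset_left))
      rintro x ⟨hx | hx, hxL⟩
      · exact absurd hxL hx.2
      · exact hx

section Gprime

variable {V : Type*} {G : SimpleGraph V} {ℓ r : ℕ}

variable (V ℓ r) in
def secondLayer : Set (V ⊕ (Fin (ℓ - 1) ⊕ Fin r)) := range (Sum.inr ∘ Sum.inl)

variable (V ℓ r) in
def thirdLayer : Set (V ⊕ (Fin (ℓ - 1) ⊕ Fin r)) := range (Sum.inr ∘ Sum.inr)

lemma ncard_secondLayer : (secondLayer V ℓ r).ncard = ℓ - 1 := by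
  rw [secondLayer, ncard_range_of_injective (Sum.inr_injective.comp Sum.inl_injective)]
  simp

lemma ncard_thirdLayer : (thirdLayer V ℓ r).ncard = r := by
  rw [thirdLayer, ncard_range_of_injective (Sum.inr_injective.comp Sum.inr_injective)]
  simp

lemma disjoint_secondLayer_thirdLayer : Disjoint (secondLayer V ℓ r) (thirdLayer V ℓ r) :=
  disjoint_left.mpr <| by rintro _ ⟨b, rfl⟩ ⟨x, hx⟩; cases hx

lemma range_inr_eq_secondLayer_union_thirdLayer :
    range (Sum.inr : Fin (ℓ - 1) ⊕ Fin r → V ⊕ _) = secondLayer V ℓ r ∪ thirdLayer V ℓ r := by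
  ext w
  constructor
  · rintro ⟨b | x, rfl⟩
    exacts [.inl ⟨b, rfl⟩, .inr ⟨x, rfl⟩]
  · rintro (⟨b, rfl⟩ | ⟨x, rfl⟩) <;> exact ⟨_, rfl⟩

lemma closedNbhd_Gprime_inl_subset (u : V) :
    closedNbhd (Gprime G ℓ r) 1 (.inl u) ⊆ Sum.inl '' closedNbhd G 1 u ∪ secondLayer V ℓ r := by
  intro w hw
  rcases mem_closedNbhd_one.mp hw with rfl | hadj
  · exact .inl ⟨u, mem_closedNbhd_one.mpr (.inl rfl), rfl⟩
  · rcases w with v | b | x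
    · exact .inl ⟨v, mem_closedNbhd_one.mpr (.inr hadj), rfl⟩
    · exact .inr ⟨b, rfl⟩
    · exact hadj.elim

lemma closedNbhd_Gprime_thirdLayer_subset {z} (hz : z ∈ thirdLayer V ℓ r) :
    closedNbhd (Gprime G ℓ r) 1 z ⊆ {z} ∪ secondLayer V ℓ r := by
  obtain ⟨x, rfl⟩ := hz
  intro w hw
  rcases mem_closedNbhd_one.mp hw with rfl | hadj
  · exact .inl rfl
  · rcases w with v | b | y
    · exact hadj.elim
    · exact .inr ⟨b, rfl⟩
    · exact hadj.elim

lemma biUnion_closedNbhd_Gprime_inter_subset {L : Set (V ⊕ (Fin (ℓ - 1) ⊕ Fin r))} {U : Set V}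
    (hU : ∀ u ∈ U, ∀ v ∈ closedNbhd G 1 u, Sum.inl v ∉ L) {Z} (hZ : Z ⊆ thirdLayer V ℓ r) :
    (⋃ w ∈ Sum.inl '' U ∪ Z, closedNbhd (Gprime G ℓ r) 1 w) ∩ L ⊆
      (secondLayer V ℓ r ∩ L) ∪ (Z ∩ L) := by
  rintro w ⟨hw, hwL⟩
  simp only [mem_iUnion, exists_prop] at hw
  obtain ⟨_, ⟨u, hu, rfl⟩ | hz, hwz⟩ := hw
  · rcases closedNbhd_Gprime_inl_subset u hwz with ⟨v, hv, rfl⟩ | hw2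
    · exact absurd hwL (hU u hu v hv)
    · exact .inl ⟨hw2, hwL⟩
  · rcases closedNbhd_Gprime_thirdLayer_subset (hZ hz) hwz with rfl | hw2
    · exact .inr ⟨hz, hwL⟩
    · exact .inl ⟨hw2, hwL⟩

lemma le_ncard_secondLayer_inter_add_ncard_inter [Finite V] {m : ℕ}
    {L : Set (V ⊕ (Fin (ℓ - 1) ⊕ Fin r))} (hL : IsDistTupleDomSet (Gprime G ℓ r) 1 m ℓ r L)
    {U : Set V} (hU : ∀ u ∈ U, ∀ v ∈ closedNbhd G 1 u, Sum.inl v ∉ L)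
    {Z} (hZ : Z ⊆ thirdLayer V ℓ r) (hcard : U.ncard + Z.ncard = r) :
    ℓ ≤ (secondLayer V ℓ r ∩ L).ncard + (Z ∩ L).ncard := by
  have hdisj : Disjoint (Sum.inl '' U) Z :=
    disjoint_left.mpr <| by rintro _ ⟨u, -, rfl⟩ hz; obtain ⟨x, hx⟩ := hZ hz; cases hx
  have hcard' : (Sum.inl '' U ∪ Z).ncard = r := by
    rw [ncard_union_eq hdisj, ncard_image_of_injective _ Sum.inl_injective, hcard]
  calc ℓ ≤ ((⋃ w ∈ Sum.inl '' U ∪ Z, closedNbhd (Gprime G ℓ r) 1 w) ∩ L).ncard := hL.2 _ hcard'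
    _ ≤ ((secondLayer V ℓ r ∩ L) ∪ (Z ∩ L)).ncard :=
      ncard_le_ncard (biUnion_closedNbhd_Gprime_inter_subset hU hZ)
    _ ≤ _ := ncard_union_le _ _

lemma ncard_inter_range_inr [Finite V] (L : Set (V ⊕ (Fin (ℓ - 1) ⊕ Fin r))) :
    (L ∩ range Sum.inr).ncard = (secondLayer V ℓ r ∩ L).ncard + (thirdLayer V ℓ r ∩ L).ncard := by
  rw [range_inr_eq_secondLayer_union_thirdLayer, inter_comm, union_inter_distrib_right,
    ncard_union_eq (disjoint_secondLayer_thirdLayer.mono inter_subset_left inter_subset_left)]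

end Gprime

theorem stmt_3_general {V : Type*} [Fintype V] (G : SimpleGraph V) (m ℓ r : ℕ)
    (hl : 0 < ℓ)
    (L : Set (V ⊕ (Fin (ℓ - 1) ⊕ Fin r)))
    (hL : IsDistTupleDomSet (Gprime G ℓ r) 1 m ℓ r L)
    (D : Set V) (hD : D = {v : V | Sum.inl v ∈ L})
    (U : Set V) (s : ℕ) (hUs : U.ncard = s)
    (hUD : (⋃ u ∈ U, closedNbhd G 1 u) ∩ D = ∅) :
    ℓ + s ≤ (L ∩ Set.range Sum.inr).ncard := by
  subst hD
  have hU : ∀ u ∈ U, ∀ v ∈ closedNbhd G 1 u, Sum.inl v ∉ L := fun u hu v hv hvL ↦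
    (eq_empty_iff_forall_notMem.mp hUD) v ⟨mem_biUnion hu hv, hvL⟩
  obtain ⟨U₀, hU₀U, hU₀⟩ := exists_subset_card_eq (show min r s ≤ U.ncard by omega)
  obtain ⟨Z, hZ, hZcard, hZL⟩ := exists_subset_ncard_eq_ncard_inter_le L (toFinite _)
    (show r - min r s ≤ (thirdLayer V ℓ r).ncard by rw [ncard_thirdLayer]; omega)
  have hℓ := le_ncard_secondLayer_inter_add_ncard_inter hL (fun u hu ↦ hU u (hU₀U hu)) hZ
    (by omega)
  have h2 : (secondLayer V ℓ r ∩ L).ncard ≤ ℓ - 1 :=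
    (ncard_le_ncard inter_subset_left (toFinite _)).trans_eq ncard_secondLayer
  have h3 := ncard_inter_add_ncard_sdiff_eq_ncard (thirdLayer V ℓ r) L
  rw [ncard_thirdLayer] at h3
  rw [ncard_inter_range_inr]
  omega

/-- If `L` is a 1-distance `m`-tuple `(ℓ, r)`-dominating set of `G'`,
`D = {vᵢ ∈ V : vᵢ¹ ∈ L}`, and `U¹ ⊆ V` is a nonempty set with `|U¹| = s` such that
`(⋃_{u ∈ U¹} N¹_G[u]) ∩ D = ∅`, then `|L ∩ (V² ∪ V³)| ≥ ℓ + s`. -/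
theorem stmt_3 {V : Type*} [Fintype V] (G : SimpleGraph V) (m ℓ r : ℕ)
    (hm : 0 < m) (hl : 0 < ℓ) (hr : 0 < r) (hml : m ≤ ℓ)
    (hln : ℓ < Fintype.card V) (hrn : r < Fintype.card V)
    (L : Set (V ⊕ (Fin (ℓ - 1) ⊕ Fin r)))
    (hL : IsDistTupleDomSet (Gprime G ℓ r) 1 m ℓ r L)
    (D : Set V) (hD : D = {v : V | Sum.inl v ∈ L})
    (U : Set V) (s : ℕ) (hUne : U.Nonempty) (hUs : U.ncard = s)
    (hUD : (⋃ u ∈ U, closedNbhd G 1 u) ∩ D = ∅) :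
    ℓ + s ≤ (L ∩ Set.range Sum.inr).ncard :=
  stmt_3_general G m ℓ r hl L hL D hD U s hUs hUD
end

section
/- Let G = (V, E) be a simple undirected graph with V = {v_1, …, v_n}, let m ≤ ℓ and r be positive integers with ℓ, r < n, and let G' be the graph constructed from G as described. If G' has a 1-distance m-tuple (ℓ, r)-dominating set of cardinality at most k + ℓ, then G has a dominating set of cardinality at most k. -/
/-!
Let `L` be the given set, `P = L ∩ V¹` and `W` the vertices of `G` not dominated by `P`, so that
`P ∪ W` dominates `G`. In `G'` a vertex of `W` sees no vertex of `L ∩ V¹` and none of `V³`, and a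
vertex of `V³` sees only `V²` and itself. Applying condition (ii) to `W` together with `r - |W|`
vertices of `V³` containing as few vertices of `L` as possible, and using `|V²| = ℓ - 1 < ℓ`,
forces `|L ∩ V³| ≥ |W| + ℓ - |L ∩ V²|`; hence `|P ∪ W| ≤ |L| - ℓ ≤ k`. The same count with `r`
vertices of `W` shows `|W| ≤ r`, which that choice requires.
-/

open Set

/-- `D` is a dominating set of `G`: every vertex is in the closed `1`-neighborhood of some
vertex of `D`. -/
def IsDomSet {V : Type*} (G : SimpleGraph V) (D : Set V) : Prop :=
  ∀ v : V, ∃ u ∈ D, u ∈ closedNbhd G 1 v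

open SimpleGraph

lemma mem_closedNbhd_one_iff {V : Type*} (G : SimpleGraph V) {u v : V} :
    u ∈ closedNbhd G 1 v ↔ u = v ∨ G.Adj u v := by
  simp only [closedNbhd, mem_ofPred_eq]
  constructor
  · rintro ⟨hreach, hd⟩
    interval_cases h : G.dist u v
    · exact Or.inl (hreach.dist_eq_zero_iff.mp h)
    · exact Or.inr (dist_eq_one_iff_adj.mp h)
  · rintro (rfl | hadj)
    · simp
    · exact ⟨hadj.reachable, (dist_eq_one_iff_adj.mpr hadj).le⟩

def undominated {V : Type*} (G : SimpleGraph V) (D : Set V) : Set V :=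
  {v | ∀ u ∈ D, u ∉ closedNbhd G 1 v}

lemma isDomSet_union_undominated {V : Type*} (G : SimpleGraph V) (D : Set V) :
    IsDomSet G (D ∪ undominated G D) := by
  intro v
  by_cases hv : v ∈ undominated G D
  · exact ⟨v, Or.inr hv, (mem_closedNbhd_one_iff G).mpr (Or.inl rfl)⟩
  · simp only [undominated, mem_ofPred_eq, not_forall, not_not] at hv
    obtain ⟨u, hu, huv⟩ := hv
    exact ⟨u, Or.inl hu, huv⟩

lemma Set.ncard_eq_ncard_preimage_inl_add_ncard_preimage_inr {α β : Type*} [Finite α]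
    [Finite β] (s : Set (α ⊕ β)) :
    s.ncard = (Sum.inl ⁻¹' s).ncard + (Sum.inr ⁻¹' s).ncard := by
  conv_lhs => rw [← image_preimage_inl_union_image_preimage_inr s]
  rw [ncard_union_eq disjoint_image_inl_image_inr,
    ncard_image_of_injective _ Sum.inl_injective, ncard_image_of_injective _ Sum.inr_injective]

lemma Set.exists_ncard_eq_ncard_inter_le {α : Type*} [Finite α] (A : Set α) {t : ℕ}
    (ht : t ≤ Nat.card α) : ∃ T : Set α, T.ncard = t ∧ (T ∩ A).ncard ≤ t - Aᶜ.ncard := by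
  rcases le_total t Aᶜ.ncard with h | h
  · obtain ⟨T, hTA, rfl⟩ := exists_subset_card_eq h
    refine ⟨T, rfl, ?_⟩
    rw [(subset_compl_iff_disjoint_right.mp hTA).inter_eq]
    simp
  · obtain ⟨T, hAT, -, rfl⟩ :=
      exists_subsuperset_card_eq (subset_univ Aᶜ) h (by rwa [ncard_univ])
    exact ⟨T, rfl, by rw [← sdiff_compl, ncard_sdiff hAT]⟩

section Gprime

variable {V : Type*} (G : SimpleGraph V) {ℓ r : ℕ}

/-- In `L`, a vertex of `V¹` not dominated by `L ∩ V¹` sees only `V²`, and a vertex of `V³` sees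
only `V²` and itself. -/
lemma iUnion_closedNbhd_Gprime_inter_subset (L : Set (V ⊕ (Fin (ℓ - 1) ⊕ Fin r))) {W : Set V}
    (hW : W ⊆ undominated G (Sum.inl ⁻¹' L)) (T : Set (Fin r)) :
    (⋃ x ∈ Sum.inl '' W ∪ (Sum.inr ∘ Sum.inr) '' T, closedNbhd (Gprime G ℓ r) 1 x) ∩ L ⊆
      (Sum.inr ∘ Sum.inl) '' (Sum.inl ⁻¹' (Sum.inr ⁻¹' L)) ∪
        (Sum.inr ∘ Sum.inr) '' (T ∩ Sum.inr ⁻¹' (Sum.inr ⁻¹' L)) := by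
  rintro x ⟨hx, hxL⟩
  simp only [mem_iUnion, exists_prop] at hx
  obtain ⟨_, ⟨w, hw, rfl⟩ | ⟨c, hc, rfl⟩, hxu⟩ := hx <;>
    rcases x with a | b | c' <;>
    simp_all [mem_closedNbhd_one_iff, Gprime, primeAdj]
  exact hW hw a hxL ((mem_closedNbhd_one_iff G).mpr hxu)

/-- Apply the covering bound to `U = W ∪ T`, where `T` consists of `r - |W|` vertices of `V³`
meeting `L` as little as possible. -/
lemma le_ncard_add_ncard_sub_of_subset_undominated [Finite V]
    {L : Set (V ⊕ (Fin (ℓ - 1) ⊕ Fin r))}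
    (hL : ∀ U : Set (V ⊕ (Fin (ℓ - 1) ⊕ Fin r)), U.ncard = r →
      ℓ ≤ ((⋃ u ∈ U, closedNbhd (Gprime G ℓ r) 1 u) ∩ L).ncard)
    {W : Set V} (hW : W ⊆ undominated G (Sum.inl ⁻¹' L)) (hWr : W.ncard ≤ r) :
    ℓ ≤ (Sum.inl ⁻¹' (Sum.inr ⁻¹' L)).ncard +
      ((Sum.inr ⁻¹' (Sum.inr ⁻¹' L)).ncard - W.ncard) := by
  obtain ⟨T, hT, hTA⟩ :=
    exists_ncard_eq_ncard_inter_le (Sum.inr ⁻¹' (Sum.inr ⁻¹' L)) (t := r - W.ncard) (by simp)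
  have hinj₂ : (Sum.inr ∘ Sum.inl : Fin (ℓ - 1) → V ⊕ (Fin (ℓ - 1) ⊕ Fin r)).Injective :=
    Sum.inr_injective.comp Sum.inl_injective
  have hinj₃ : (Sum.inr ∘ Sum.inr : Fin r → V ⊕ (Fin (ℓ - 1) ⊕ Fin r)).Injective :=
    Sum.inr_injective.comp Sum.inr_injective
  have hU : (Sum.inl '' W ∪ (Sum.inr ∘ Sum.inr) '' T : Set (V ⊕ (Fin (ℓ - 1) ⊕ Fin r))).ncard
      = r := by
    rw [ncard_union_eq (by simp [Set.disjoint_left]),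
      ncard_image_of_injective _ Sum.inl_injective, ncard_image_of_injective _ hinj₃]
    omega
  have hcover := (ncard_le_ncard (iUnion_closedNbhd_Gprime_inter_subset G L hW T)).trans
    (ncard_union_le _ _)
  rw [ncard_image_of_injective _ hinj₂, ncard_image_of_injective _ hinj₃] at hcover
  set A := Sum.inr ⁻¹' (Sum.inr ⁻¹' L)
  have hA : A.ncard ≤ r := by simpa using ncard_le_card A
  have hAc : Aᶜ.ncard = r - A.ncard := by simpa using ncard_compl A
  have := hL _ hU
  omega

end Gprime

theorem stmt_4_general {V : Type*} [Fintype V] (G : SimpleGraph V) (m ℓ r : ℕ)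
    (hl : 0 < ℓ) (k : ℕ)
    (h : ∃ L : Set (V ⊕ (Fin (ℓ - 1) ⊕ Fin r)),
      IsDistTupleDomSet (Gprime G ℓ r) 1 m ℓ r L ∧ L.ncard ≤ k + ℓ) :
    ∃ D : Set V, IsDomSet G D ∧ D.ncard ≤ k := by
  obtain ⟨L, ⟨-, hL⟩, hcard⟩ := h
  have key {W : Set V} := le_ncard_add_ncard_sub_of_subset_undominated G hL (W := W)
  have hV₂ : (Sum.inl ⁻¹' (Sum.inr ⁻¹' L)).ncard ≤ ℓ - 1 := by
    simpa using ncard_le_card (Sum.inl ⁻¹' (Sum.inr ⁻¹' L))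
  have hV₃ : (Sum.inr ⁻¹' (Sum.inr ⁻¹' L)).ncard ≤ r := by
    simpa using ncard_le_card (Sum.inr ⁻¹' (Sum.inr ⁻¹' L))
  have hsplit := ncard_eq_ncard_preimage_inl_add_ncard_preimage_inr L
  rw [ncard_eq_ncard_preimage_inl_add_ncard_preimage_inr (Sum.inr ⁻¹' L)] at hsplit
  set P := Sum.inl ⁻¹' L
  have hWr : (undominated G P).ncard ≤ r := by
    by_contra! hlt
    obtain ⟨W, hW, hWcard⟩ := exists_subset_card_eq hlt.le
    have := key hW hWcard.le
    omega
  have := key subset_rfl hWr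
  refine ⟨P ∪ undominated G P, isDomSet_union_undominated G P, ?_⟩
  have := ncard_union_le P (undominated G P)
  omega

/-- If `G'` has a 1-distance `m`-tuple `(ℓ, r)`-dominating set of cardinality at
most `k + ℓ`, then `G` has a dominating set of cardinality at most `k`. -/
theorem stmt_4 {V : Type*} [Fintype V] (G : SimpleGraph V) (m ℓ r : ℕ)
    (hm : 0 < m) (hl : 0 < ℓ) (hr : 0 < r) (hml : m ≤ ℓ)
    (hln : ℓ < Fintype.card V) (hrn : r < Fintype.card V) (k : ℕ)
    (h : ∃ L : Set (V ⊕ (Fin (ℓ - 1) ⊕ Fin r)),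
      IsDistTupleDomSet (Gprime G ℓ r) 1 m ℓ r L ∧ L.ncard ≤ k + ℓ) :
    ∃ D : Set V, IsDomSet G D ∧ D.ncard ≤ k :=
  stmt_4_general G m ℓ r hl k h
end
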